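/- Let W be a standard one-dimensional Brownian motion on a probability space (Ω, 𝓕, ℙ). Then for all real numbers t, a, b, c ∈ (0,∞) with a < b one has E[ 1_{{a ≤ exp(W(t)) ≤ b}} · exp( c · ∫_0^t exp(W(s)) ds ) ] = ∞, where the inner integral is the pathwise Lebesgue integral of the continuous sample path s ↦ exp(W(s,ω)). -/

import Mathlib

/-!
Fix `u = t/2`, a short step `h`, `r = u + h`, `γ = (log b - log a)/4` and `m ∈ ℕ`. On the event
that the path stays within `γ` of `W u` on `[u, r]`, that `W u ∈ [m + γ, m + 2γ]` and that
`W t - W r ∈ [log a - m, log a - m + γ]`, the endpoint `W t` lies in `[log a, log b]` while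
`∫₀ᵗ exp W ≥ h e^m`. The three conditions concern increments over disjoint time intervals, so the
event has probability at least `δ · exp(-C m²)`, where `δ > 0` is the probability of the first
condition; hence the expectation is at least `exp(c h e^m) δ exp(-C m²) → ∞`.
The first condition is imposed at dyadic times only, which makes it an event independent of the
other two; continuity of the paths extends it to all of `[u, r]`, and for small `h` it has
positive probability by continuity at `u`.
-/

open MeasureTheory ProbabilityTheory
open scoped ENNReal

/-- A standard one-dimensional Brownian motion on a probability space `(Ω, 𝓕, P)`:
a stochastic process `W : [0,∞) × Ω → ℝ` (modelled as `W : ℝ → Ω → ℝ`, relevant only for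
nonnegative times) with `W 0 = 0`, P-almost surely continuous sample paths,
independent increments, and `W t - W s` normally distributed with mean `0` and
variance `t - s` for all `0 ≤ s ≤ t`. -/
structure IsStandardBrownianMotion {Ω : Type*} [MeasurableSpace Ω] (P : Measure Ω)
    (W : ℝ → Ω → ℝ) : Prop where
  isProbabilityMeasure : IsProbabilityMeasure P
  measurable : ∀ t : ℝ, Measurable (W t)
  start : ∀ ω, W 0 ω = 0
  ae_continuous : ∀ᵐ ω ∂P, ContinuousOn (fun t => W t ω) (Set.Ici 0)
  indep_increments : ∀ (n : ℕ) (t : Fin (n + 1) → ℝ), (∀ i, 0 ≤ t i) → Monotone t →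
    iIndepFun
      (fun (i : Fin n) (ω : Ω) => W (t i.succ) ω - W (t i.castSucc) ω) P
  gauss_increments : ∀ s t : ℝ, 0 ≤ s → s ≤ t →
    P.map (fun ω => W t ω - W s ω) = gaussianReal 0 (Real.toNNReal (t - s))

open Filter Set Real
open scoped NNReal Topology

theorem dyadic_mem_Icc {h : ℝ} (hh : 0 ≤ h) {a b l j : ℕ}
    (hj : j ∈ Icc (a * 2 ^ l) (b * 2 ^ l)) :
    h * j / 2 ^ l ∈ Icc (h * a) (h * b) := by
  have h2 : (0 : ℝ) < 2 ^ l := by positivity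
  constructor
  · rw [le_div_iff₀ h2, mul_assoc]
    exact mul_le_mul_of_nonneg_left (by exact_mod_cast hj.1) hh
  · rw [div_le_iff₀ h2, mul_assoc]
    exact mul_le_mul_of_nonneg_left (by exact_mod_cast hj.2) hh

theorem ContinuousOn.mapsTo_Icc_of_dyadic {f : ℝ → ℝ} {C : Set ℝ} (hC : IsClosed C)
    {h : ℝ} (hh : 0 < h) {a b : ℕ} (hf : ContinuousOn f (Icc (h * a) (h * b)))
    (hgrid : ∀ l : ℕ, ∀ j ∈ Icc (a * 2 ^ l) (b * 2 ^ l), f (h * j / 2 ^ l) ∈ C) :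
    MapsTo f (Icc (h * a) (h * b)) C := by
  intro s hs
  -- `y l` is the first dyadic point of level `l` to the right of `s`
  set y : ℕ → ℝ := fun l => h * ⌈s * 2 ^ l / h⌉₊ / 2 ^ l
  have hj : ∀ l, ⌈s * 2 ^ l / h⌉₊ ∈ Icc (a * 2 ^ l) (b * 2 ^ l) := fun l => by
    constructor
    · have : ((a * 2 ^ l : ℕ) : ℝ) ≤ s * 2 ^ l / h := by
        rw [le_div_iff₀ hh]; push_cast; nlinarith [hs.1, pow_pos two_pos (M₀ := ℝ) l]
      exact_mod_cast this.trans (Nat.le_ceil _)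
    · refine Nat.ceil_le.2 ?_
      rw [div_le_iff₀ hh]; push_cast; nlinarith [hs.2, pow_pos two_pos (M₀ := ℝ) l]
  have hs₀ : 0 ≤ s := le_trans (by positivity) hs.1
  have hy : ∀ l, s ≤ y l ∧ y l ≤ s + h / 2 ^ l := fun l => by
    have hxy : h * (s * 2 ^ l / h) / 2 ^ l = s := by field_simp
    constructor
    · calc s = h * (s * 2 ^ l / h) / 2 ^ l := hxy.symm
        _ ≤ h * ⌈s * 2 ^ l / h⌉₊ / 2 ^ l := by gcongr; exact Nat.le_ceil _
    · calc h * ⌈s * 2 ^ l / h⌉₊ / 2 ^ l ≤ h * (s * 2 ^ l / h + 1) / 2 ^ l := by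
            gcongr; exact (Nat.ceil_lt_add_one (by positivity)).le
        _ = s + h / 2 ^ l := by rw [← hxy]; field_simp
  have hlim : Tendsto y atTop (𝓝 s) := by
    refine tendsto_of_tendsto_of_tendsto_of_le_of_le tendsto_const_nhds ?_
      (fun l => (hy l).1) (fun l => (hy l).2)
    simpa using (tendsto_const_nhds (x := s)).add ((tendsto_const_nhds (x := h)).div_atTop
      (tendsto_pow_atTop_atTop_of_one_lt one_lt_two))
  refine hC.mem_of_tendsto ((hf s hs).tendsto.comp
    (tendsto_nhdsWithin_iff.2 ⟨hlim, Eventually.of_forall fun l => ?_⟩))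
    (Eventually.of_forall fun l => hgrid l _ (hj l))
  exact dyadic_mem_Icc hh.le (hj l)

theorem tendsto_mul_exp_sub_mul_sq_atTop {c : ℝ} (hc : 0 < c) (A : ℝ) :
    Tendsto (fun x => c * exp x - A * x ^ 2) atTop atTop := by
  have h : Tendsto (fun x : ℝ => x ^ 2 * (c * (exp x / x ^ 2) - A)) atTop atTop :=
    (tendsto_pow_atTop two_ne_zero).atTop_mul_atTop₀ (tendsto_atTop_add_const_right _ _
      ((tendsto_exp_div_pow_atTop 2).const_mul_atTop hc))
  refine h.congr' ?_
  filter_upwards [eventually_gt_atTop 0] with x hx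
  field_simp

theorem tendsto_exp_mul_exp_mul_gaussianPDFReal {c : ℝ} (hc : 0 < c) {v : ℝ≥0} (hv : v ≠ 0)
    (B : ℝ) : Tendsto (fun x => exp (c * exp x) * gaussianPDFReal 0 v (x + B)) atTop atTop := by
  have hexp : Tendsto (fun x => c * exp (-B) * exp (x + B) - (2 * (v : ℝ))⁻¹ * (x + B) ^ 2)
      atTop atTop :=
    (tendsto_mul_exp_sub_mul_sq_atTop (by positivity) _).comp
      (tendsto_atTop_add_const_right _ B tendsto_id)
  have hv' : (0 : ℝ) < v := by positivity
  refine ((tendsto_exp_atTop.comp hexp).const_mul_atTop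
    (inv_pos.2 (sqrt_pos.2 (by positivity : 0 < 2 * π * v)))).congr fun x => ?_
  simp only [Function.comp_apply, gaussianPDFReal, sub_zero]
  rw [mul_assoc c, ← exp_add, show -B + (x + B) = x by ring, sub_eq_add_neg, exp_add,
    show -((2 * (v : ℝ))⁻¹ * (x + B) ^ 2) = -(x + B) ^ 2 / (2 * v) by ring]
  ring

theorem tendsto_exp_mul_exp_mul_gaussianPDFReal_mul {c : ℝ} (hc : 0 < c) {v w : ℝ≥0}
    (hv : v ≠ 0) (hw : w ≠ 0) (B : ℝ) :
    Tendsto (fun x => exp (c * exp x) *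
      (gaussianPDFReal 0 v (x + B) * gaussianPDFReal 0 w (x + B))) atTop atTop := by
  refine ((tendsto_exp_mul_exp_mul_gaussianPDFReal (half_pos hc) hv B).atTop_mul_atTop₀
    (tendsto_exp_mul_exp_mul_gaussianPDFReal (half_pos hc) hw B)).congr fun x => ?_
  rw [show c * exp x = c / 2 * exp x + c / 2 * exp x by ring, exp_add]
  ring

theorem ofReal_mul_gaussianPDFReal_le_gaussianReal_Icc (μ : ℝ) {v : ℝ≥0} (hv : v ≠ 0)
    {x y R : ℝ} (hR : ∀ z ∈ Icc x y, |z - μ| ≤ |R - μ|) :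
    ENNReal.ofReal ((y - x) * gaussianPDFReal μ v R) ≤ gaussianReal μ v (Icc x y) := by
  rw [gaussianReal_apply μ hv, ENNReal.ofReal_mul' (gaussianPDFReal_nonneg μ v R),
    ← volume_Icc, mul_comm, ← setLIntegral_const]
  refine setLIntegral_mono (measurable_gaussianPDF μ v) fun z hz => ENNReal.ofReal_le_ofReal ?_
  have hsq : (z - μ) ^ 2 ≤ (R - μ) ^ 2 := sq_le_sq.2 (hR z hz)
  simp only [gaussianPDFReal]
  gcongr

theorem mul_measure_le_setLIntegral {α : Type*} [MeasurableSpace α] {μ : Measure α}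
    {f : α → ℝ≥0∞} {s B : Set α} (hs : MeasurableSet s) (hsB : s ⊆ B) {K : ℝ≥0∞}
    (hK : ∀ᵐ x ∂μ, x ∈ s → K ≤ f x) : K * μ s ≤ ∫⁻ x in B, f x ∂μ :=
  calc K * μ s = ∫⁻ _ in s, K ∂μ := (setLIntegral_const s K).symm
    _ ≤ ∫⁻ x in s, f x ∂μ := setLIntegral_mono_ae' hs hK
    _ ≤ ∫⁻ x in B, f x ∂μ := lintegral_mono_set hsB

theorem ENNReal.eq_top_of_forall_ofReal_le {f : ℕ → ℝ} (hf : Tendsto f atTop atTop)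
    {I : ℝ≥0∞} (hI : ∀ m, ENNReal.ofReal (f m) ≤ I) : I = ∞ :=
  top_le_iff.1 (le_of_tendsto' (ENNReal.tendsto_ofReal_atTop.comp hf) hI)

namespace IsStandardBrownianMotion

variable {Ω : Type*} {W : ℝ → Ω → ℝ}

variable (W) in
abbrev incrementSigma (τ : ℕ → ℝ) (S : Set ℕ) : MeasurableSpace Ω :=
  ⨆ i ∈ S, MeasurableSpace.comap (fun ω => W (τ (i + 1)) ω - W (τ i) ω) inferInstance

theorem measurable_incrementSigma_Ico (τ : ℕ → ℝ) {i j : ℕ} (hij : i ≤ j) :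
    Measurable[incrementSigma W τ (Ico i j)] fun ω => W (τ j) ω - W (τ i) ω := by
  have htele : (fun ω => W (τ j) ω - W (τ i) ω) =
      fun ω => ∑ k ∈ Finset.Ico i j, (W (τ (k + 1)) ω - W (τ k) ω) := by
    ext ω
    exact (Finset.sum_Ico_sub (fun k => W (τ k) ω) hij).symm
  rw [htele]
  refine Finset.measurable_sum _ fun k hk => Measurable.of_comap_le ?_
  exact le_iSup₂ (f := fun k (_ : k ∈ Ico i j) => MeasurableSpace.comap
    (fun ω => W (τ (k + 1)) ω - W (τ k) ω) inferInstance) k (by simpa using hk)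

-- Times are written `h * j / 2 ^ l`, so that the points `h * a`, `h * b`, `h * N` used below
-- (`t / 2`, `t / 2 + h`, `t` with `h = t / (2 * n)`) lie on the dyadic grid of every level `l`.
variable (W) in
noncomputable abbrev dyadicLevelSigma (h : ℝ) (a b l : ℕ) : MeasurableSpace Ω :=
  ⨆ j ∈ Icc (a * 2 ^ l) (b * 2 ^ l),
    MeasurableSpace.comap (fun ω => W (h * j / 2 ^ l) ω - W (h * a) ω) inferInstance

variable (W) in
noncomputable abbrev dyadicIncrementSigma (h : ℝ) (a b : ℕ) : MeasurableSpace Ω :=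
  ⨆ l, dyadicLevelSigma W h a b l

variable (W) in
noncomputable def dyadicTube (h : ℝ) (a b : ℕ) (γ : ℝ) : Set Ω :=
  {ω | ∀ l : ℕ, ∀ j ∈ Icc (a * 2 ^ l) (b * 2 ^ l),
    |W (h * j / 2 ^ l) ω - W (h * a) ω| ≤ γ}

theorem dyadicLevelSigma_mono (h : ℝ) (a b : ℕ) : Monotone (dyadicLevelSigma W h a b) := by
  refine monotone_nat_of_le_succ fun l => iSup₂_le fun j hj => ?_
  have hj' : 2 * j ∈ Icc (a * 2 ^ (l + 1)) (b * 2 ^ (l + 1)) := by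
    simp only [mem_Icc, pow_succ] at hj ⊢
    constructor <;> nlinarith [hj.1, hj.2]
  refine le_iSup₂_of_le (f := fun j (_ : j ∈ Icc (a * 2 ^ (l + 1)) (b * 2 ^ (l + 1))) =>
    MeasurableSpace.comap (fun ω => W (h * j / 2 ^ (l + 1)) ω - W (h * a) ω) inferInstance)
    (2 * j) hj' (le_of_eq ?_)
  have hpt : h * ((2 * j : ℕ) : ℝ) / 2 ^ (l + 1) = h * j / 2 ^ l := by
    push_cast
    field_simp
    ring
  rw [hpt]

theorem measurableSet_dyadicTube (h : ℝ) (a b : ℕ) (γ : ℝ) :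
    MeasurableSet[dyadicIncrementSigma W h a b] (dyadicTube W h a b γ) := by
  simp only [dyadicTube, ofPred_forall]
  refine MeasurableSet.iInter fun l => MeasurableSet.iInter fun j =>
    MeasurableSet.iInter fun hj => ?_
  have hle : MeasurableSpace.comap (fun ω => W (h * j / 2 ^ l) ω - W (h * a) ω) inferInstance ≤
      dyadicIncrementSigma W h a b :=
    le_iSup_of_le l (le_iSup₂_of_le j hj le_rfl)
  exact hle _ ⟨{x | |x| ≤ γ}, measurableSet_le measurable_abs measurable_const, rfl⟩

theorem mul_exp_le_integral_exp_of_mem_dyadicTube {h : ℝ} (hh : 0 < h) {a b N : ℕ}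
    (hab : a ≤ b) (hbN : b ≤ N) {γ x : ℝ} {ω : Ω}
    (hω : ContinuousOn (fun s => W s ω) (Ici 0)) (htube : ω ∈ dyadicTube W h a b γ)
    (hx : x + γ ≤ W (h * a) ω) :
    h * (b - a) * exp x ≤ ∫ s in (0 : ℝ)..h * N, exp (W s ω) := by
  have hint : ∀ p q : ℝ, 0 ≤ p → 0 ≤ q →
      IntervalIntegrable (fun s => exp (W s ω)) volume p q := fun p q hp hq =>
    ((continuous_exp.comp_continuousOn hω).mono fun s hs =>
      le_trans (le_min hp hq) hs.1).intervalIntegrable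
  have hpath : MapsTo (fun s => W s ω - W (h * a) ω) (Icc (h * a) (h * b)) (Icc (-γ) γ) :=
    ContinuousOn.mapsTo_Icc_of_dyadic isClosed_Icc hh
      ((hω.mono fun s hs => le_trans (by positivity) hs.1).sub continuousOn_const)
      fun l j hj => abs_le.1 (htube l j hj)
  have hab' : h * a ≤ h * b := by gcongr
  calc h * (b - a) * exp x = ∫ _ in h * a..h * b, exp x := by
        rw [intervalIntegral.integral_const, smul_eq_mul]; ring
    _ ≤ ∫ s in h * a..h * b, exp (W s ω) :=
        intervalIntegral.integral_mono_on hab' intervalIntegrable_const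
          (hint _ _ (by positivity) (by positivity))
          fun s hs => exp_le_exp.2 (by linarith [(hpath hs).1])
    _ ≤ ∫ s in (0 : ℝ)..h * N, exp (W s ω) :=
        intervalIntegral.integral_mono_interval (by positivity) hab' (by gcongr)
          (ae_of_all _ fun s => (exp_pos _).le) (hint _ _ le_rfl (by positivity))

theorem exists_mem_dyadicTube {t γ : ℝ} (ht : 0 < t) (hγ : 0 < γ) {ω : Ω}
    (hω : ContinuousWithinAt (fun s => W s ω) (Ici 0) (t / 2)) :
    ∃ k : ℕ, ω ∈ dyadicTube W (t / (2 * (k + 2 : ℕ))) (k + 2) (k + 2 + 1) γ := by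
  obtain ⟨δ, hδ, hball⟩ := Metric.continuousWithinAt_iff.1 hω γ hγ
  obtain ⟨k, hk⟩ := exists_nat_gt (t / δ)
  refine ⟨k, fun l j hj => ?_⟩
  set h := t / (2 * (k + 2 : ℕ))
  have hmid : h * (k + 2 : ℕ) = t / 2 := by simp only [h]; field_simp
  have hr : h * (k + 2 + 1 : ℕ) = t / 2 + h := by rw [Nat.cast_succ, mul_add_one, hmid]
  have hhδ : h < δ := by
    rw [div_lt_iff₀ hδ] at hk
    rw [div_lt_iff₀ (by positivity)]
    push_cast
    nlinarith
  have hs := dyadic_mem_Icc (by positivity : 0 ≤ h) hj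
  rw [hmid, hr] at hs
  rw [hmid]
  refine (hball (le_trans (by positivity) hs.1) ?_).le
  rw [Real.dist_eq, abs_of_nonneg (by linarith [hs.1])]
  linarith [hs.2]

variable [MeasurableSpace Ω] {P : Measure Ω}

theorem iIndepFun_increments (hW : IsStandardBrownianMotion P W) {τ : ℕ → ℝ}
    (hτ₀ : ∀ i, 0 ≤ τ i) (hτ : Monotone τ) :
    iIndepFun (fun i ω => W (τ (i + 1)) ω - W (τ i) ω) P := by
  rw [iIndepFun_iff]
  intro s E hE
  obtain ⟨N, hN⟩ : ∃ N, ∀ i ∈ s, i < N :=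
    ⟨s.sup id + 1, fun i hi => Nat.lt_succ_of_le (Finset.le_sup (f := id) hi)⟩
  have hfin := (iIndepFun_iff _ _ _).1 (hW.indep_increments N (fun i => τ i)
    (fun _ => hτ₀ _) (hτ.comp Fin.val_strictMono.monotone))
  have hs : s = (Finset.univ.filter fun k : Fin N => (k : ℕ) ∈ s).map Fin.valEmbedding := by
    ext i
    simp only [Finset.mem_map, Finset.mem_filter, Finset.mem_univ, true_and,
      Fin.valEmbedding_apply]
    exact ⟨fun hi => ⟨⟨i, hN i hi⟩, hi, rfl⟩, by rintro ⟨k, hk, rfl⟩; exact hk⟩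
  rw [hs, Finset.prod_map]
  convert hfin (Finset.univ.filter fun k : Fin N => (k : ℕ) ∈ s) (f' := fun k => E k)
    (fun k hk => hE k (Finset.mem_filter.1 hk).2) using 2
  · ext ω
    simp
  · rfl

theorem indep_incrementSigma (hW : IsStandardBrownianMotion P W) {τ : ℕ → ℝ}
    (hτ₀ : ∀ i, 0 ≤ τ i) (hτ : Monotone τ) {S T : Set ℕ} (hST : Disjoint S T) :
    Indep (incrementSigma W τ S) (incrementSigma W τ T) P :=
  indep_iSup_of_disjoint (fun _ => ((hW.measurable _).sub (hW.measurable _)).comap_le)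
    (hW.iIndepFun_increments hτ₀ hτ).iIndep hST

theorem indepFun_sub_sub (hW : IsStandardBrownianMotion P W) {τ : ℕ → ℝ}
    (hτ₀ : ∀ i, 0 ≤ τ i) (hτ : Monotone τ) {i j k l : ℕ} (hij : i ≤ j) (hjk : j ≤ k)
    (hkl : k ≤ l) :
    IndepFun (fun ω => W (τ j) ω - W (τ i) ω) (fun ω => W (τ l) ω - W (τ k) ω) P := by
  rw [IndepFun_iff_Indep]
  exact indep_of_indep_of_le_right (indep_of_indep_of_le_left
    (hW.indep_incrementSigma hτ₀ hτ (Set.Ico_disjoint_Ico.2 (by omega)))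
    (measurable_incrementSigma_Ico τ hij).comap_le)
    (measurable_incrementSigma_Ico τ hkl).comap_le

theorem indep_iSup_comap_sub (hW : IsStandardBrownianMotion P W) {τ : ℕ → ℝ}
    (hτ₀ : ∀ i, 0 ≤ τ i) (hτ : Monotone τ) {a b N : ℕ} (hbN : b ≤ N) :
    Indep
      (⨆ j ∈ Icc a b, MeasurableSpace.comap (fun ω => W (τ j) ω - W (τ a) ω) inferInstance)
      (MeasurableSpace.comap (fun ω => W (τ a) ω - W (τ 0) ω) inferInstance ⊔
        MeasurableSpace.comap (fun ω => W (τ N) ω - W (τ b) ω) inferInstance) P := by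
  have hdisj : Disjoint (Ico a b) (Ico 0 a ∪ Ico b N) :=
    disjoint_union_right.2 ⟨Ico_disjoint_Ico_same.symm, Ico_disjoint_Ico_same⟩
  refine indep_of_indep_of_le_right (indep_of_indep_of_le_left
    (hW.indep_incrementSigma hτ₀ hτ hdisj) (iSup₂_le fun j hj => ?_)) (sup_le ?_ ?_)
  · exact ((measurable_incrementSigma_Ico τ hj.1).mono
      (biSup_mono (Ico_subset_Ico_right hj.2)) le_rfl).comap_le
  · exact ((measurable_incrementSigma_Ico τ (Nat.zero_le a)).mono
      (biSup_mono subset_union_left) le_rfl).comap_le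
  · exact ((measurable_incrementSigma_Ico τ hbN).mono
      (biSup_mono subset_union_right) le_rfl).comap_le

theorem dyadicIncrementSigma_le (hW : IsStandardBrownianMotion P W) (h : ℝ) (a b : ℕ) :
    dyadicIncrementSigma W h a b ≤ ‹MeasurableSpace Ω› :=
  iSup_le fun _ => iSup₂_le fun _ _ => ((hW.measurable _).sub (hW.measurable _)).comap_le

theorem indep_dyadicIncrementSigma (hW : IsStandardBrownianMotion P W) {h : ℝ} (hh : 0 ≤ h)
    {a b N : ℕ} (hbN : b ≤ N) :
    Indep (dyadicIncrementSigma W h a b)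
      (MeasurableSpace.comap (W (h * a)) inferInstance ⊔
        MeasurableSpace.comap (fun ω => W (h * N) ω - W (h * b) ω) inferInstance) P := by
  have := hW.isProbabilityMeasure
  refine indep_iSup_of_monotone (fun l => ?_)
    (fun l => (le_iSup _ l).trans (hW.dyadicIncrementSigma_le h a b))
    (sup_le (hW.measurable _).comap_le ((hW.measurable _).sub (hW.measurable _)).comap_le)
    (dyadicLevelSigma_mono h a b)
  have hτ : Monotone fun j : ℕ => h * j / 2 ^ l := fun i j hij =>
    div_le_div_of_nonneg_right (mul_le_mul_of_nonneg_left (by exact_mod_cast hij) hh)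
      (by positivity)
  have hgrid : ∀ n : ℕ, h * ((n * 2 ^ l : ℕ) : ℝ) / 2 ^ l = h * n := fun n => by
    push_cast
    field_simp
  have := hW.indep_iSup_comap_sub (fun j => by positivity) hτ
    (a := a * 2 ^ l) (Nat.mul_le_mul_right (2 ^ l) hbN)
  simpa only [hgrid, Nat.cast_zero, mul_zero, zero_div, hW.start, sub_zero] using this

theorem measure_dyadicTube_inter (hW : IsStandardBrownianMotion P W) {h : ℝ} (hh : 0 ≤ h)
    {a b N : ℕ} (hab : a ≤ b) (hbN : b ≤ N) (γ : ℝ) {I J : Set ℝ} (hI : MeasurableSet I)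
    (hJ : MeasurableSet J) :
    P (dyadicTube W h a b γ ∩
        (W (h * a) ⁻¹' I ∩ (fun ω => W (h * N) ω - W (h * b) ω) ⁻¹' J)) =
      P (dyadicTube W h a b γ) *
        (P (W (h * a) ⁻¹' I) * P ((fun ω => W (h * N) ω - W (h * b) ω) ⁻¹' J)) := by
  have hτ : Monotone fun j : ℕ => h * j := fun i j hij =>
    mul_le_mul_of_nonneg_left (by exact_mod_cast hij) hh
  have hindep := hW.indepFun_sub_sub (fun j => by positivity) hτ (Nat.zero_le a) hab hbN
  simp only [Nat.cast_zero, mul_zero, hW.start, sub_zero] at hindep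
  have hIJ : MeasurableSet[MeasurableSpace.comap (W (h * a)) inferInstance ⊔
      MeasurableSpace.comap (fun ω => W (h * N) ω - W (h * b) ω) inferInstance]
      (W (h * a) ⁻¹' I ∩ (fun ω => W (h * N) ω - W (h * b) ω) ⁻¹' J) := by
    refine MeasurableSet.inter ?_ ?_
    · exact le_sup_left (α := MeasurableSpace Ω) _ ⟨I, hI, rfl⟩
    · exact le_sup_right (α := MeasurableSpace Ω) _ ⟨J, hJ, rfl⟩
  rw [(Indep_iff _ _ _).1 (hW.indep_dyadicIncrementSigma hh hbN) _ _
    (measurableSet_dyadicTube h a b γ) hIJ, hindep.meas_inter ⟨I, hI, rfl⟩ ⟨J, hJ, rfl⟩]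

theorem ofReal_mul_gaussianPDFReal_le_measure_sub_mem_Icc (hW : IsStandardBrownianMotion P W)
    {s t : ℝ} (hs : 0 ≤ s) (hst : s < t) {x y R : ℝ} (hR : ∀ z ∈ Icc x y, |z| ≤ |R|) :
    ENNReal.ofReal ((y - x) * gaussianPDFReal 0 (t - s).toNNReal R) ≤
      P ((fun ω => W t ω - W s ω) ⁻¹' Icc x y) := by
  rw [← Measure.map_apply (f := fun ω => W t ω - W s ω)
    ((hW.measurable t).sub (hW.measurable s)) measurableSet_Icc,
    hW.gauss_increments s t hs hst.le]
  exact ofReal_mul_gaussianPDFReal_le_gaussianReal_Icc 0 (by simpa using hst)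
    (by simpa using hR)

theorem exists_measure_dyadicTube_ne_zero (hW : IsStandardBrownianMotion P W) {t γ : ℝ}
    (ht : 0 < t) (hγ : 0 < γ) :
    ∃ n : ℕ, 2 ≤ n ∧ P (dyadicTube W (t / (2 * n)) n (n + 1) γ) ≠ 0 := by
  have := hW.isProbabilityMeasure
  have hae : ∀ᵐ ω ∂P,
      ω ∈ ⋃ k : ℕ, dyadicTube W (t / (2 * (k + 2 : ℕ))) (k + 2) (k + 2 + 1) γ := by
    filter_upwards [hW.ae_continuous] with ω hω
    exact mem_iUnion.2 (exists_mem_dyadicTube ht hγ (hω _ (mem_Ici.2 (by positivity))))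
  obtain ⟨k, hk⟩ := exists_measure_pos_of_not_measure_iUnion_null fun hnull =>
    let ⟨_, hω, hω'⟩ := (hae.and (measure_eq_zero_iff_ae_notMem.1 hnull)).exists
    hω' hω
  exact ⟨k + 2, by omega, hk.ne'⟩

theorem ofReal_le_measure_dyadicTube_inter (hW : IsStandardBrownianMotion P W) {h : ℝ}
    (hh : 0 < h) {a b N : ℕ} (ha : 0 < a) (hab : a ≤ b) (hbN : b < N) {γ : ℝ}
    (hγ : 0 ≤ γ) (L : ℝ) {x : ℝ} (hx : 0 ≤ x) :
    ENNReal.ofReal ((P (dyadicTube W h a b γ)).toReal * γ ^ 2 *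
        (gaussianPDFReal 0 (h * a).toNNReal (x + (|L| + 2 * γ)) *
          gaussianPDFReal 0 (h * N - h * b).toNNReal (x + (|L| + 2 * γ)))) ≤
      P (dyadicTube W h a b γ ∩ (W (h * a) ⁻¹' Icc (x + γ) (x + 2 * γ) ∩
        (fun ω => W (h * N) ω - W (h * b) ω) ⁻¹' Icc (L - x) (L - x + γ))) := by
  have := hW.isProbabilityMeasure
  set R := x + (|L| + 2 * γ)
  have hR : 0 ≤ R := by positivity
  have hE₁ : ENNReal.ofReal (γ * gaussianPDFReal 0 (h * a).toNNReal R) ≤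
      P (W (h * a) ⁻¹' Icc (x + γ) (x + 2 * γ)) := by
    have := hW.ofReal_mul_gaussianPDFReal_le_measure_sub_mem_Icc le_rfl
      (by positivity : (0 : ℝ) < h * a) (x := x + γ) (y := x + 2 * γ) (R := R) fun z hz => by
        rw [abs_of_nonneg (by linarith [hz.1]), abs_of_nonneg hR]
        linarith [hz.2, abs_nonneg L]
    simpa [hW.start, show x + 2 * γ - (x + γ) = γ by ring] using this
  have hE₃ : ENNReal.ofReal (γ * gaussianPDFReal 0 (h * N - h * b).toNNReal R) ≤
      P ((fun ω => W (h * N) ω - W (h * b) ω) ⁻¹' Icc (L - x) (L - x + γ)) := by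
    have := hW.ofReal_mul_gaussianPDFReal_le_measure_sub_mem_Icc (s := h * b) (t := h * N)
      (by positivity) (by gcongr) (x := L - x) (y := L - x + γ) (R := R) fun z hz => by
        rw [abs_of_nonneg hR, abs_le]
        constructor <;> linarith [hz.1, hz.2, neg_abs_le L, le_abs_self L]
    simpa [show L - x + γ - (L - x) = γ by ring] using this
  rw [measure_dyadicTube_inter hW hh.le hab hbN.le γ measurableSet_Icc measurableSet_Icc]
  calc _ = ENNReal.ofReal (P (dyadicTube W h a b γ)).toReal *
        (ENNReal.ofReal (γ * gaussianPDFReal 0 (h * a).toNNReal R) *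
          ENNReal.ofReal (γ * gaussianPDFReal 0 (h * N - h * b).toNNReal R)) := by
        rw [← ENNReal.ofReal_mul (mul_nonneg hγ (gaussianPDFReal_nonneg _ _ _)),
          ← ENNReal.ofReal_mul ENNReal.toReal_nonneg]
        ring_nf
    _ ≤ _ := by
        rw [ENNReal.ofReal_toReal (measure_ne_top _ _)]
        gcongr

theorem ofReal_le_setLIntegral_exp_integral_exp (hW : IsStandardBrownianMotion P W) {h : ℝ}
    (hh : 0 < h) {a b N : ℕ} (ha : 0 < a) (hab : a ≤ b) (hbN : b < N) {γ c : ℝ}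
    (hγ : 0 ≤ γ) (hc : 0 ≤ c) (L : ℝ) {x : ℝ} (hx : 0 ≤ x) :
    ENNReal.ofReal ((P (dyadicTube W h a b γ)).toReal * γ ^ 2 *
        (exp (c * h * (b - a) * exp x) *
          (gaussianPDFReal 0 (h * a).toNNReal (x + (|L| + 2 * γ)) *
            gaussianPDFReal 0 (h * N - h * b).toNNReal (x + (|L| + 2 * γ))))) ≤
      ∫⁻ ω in {ω | L ≤ W (h * N) ω ∧ W (h * N) ω ≤ L + 4 * γ},
        ENNReal.ofReal (exp (c * ∫ s in (0 : ℝ)..h * N, exp (W s ω))) ∂P := by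
  set F := dyadicTube W h a b γ ∩ (W (h * a) ⁻¹' Icc (x + γ) (x + 2 * γ) ∩
    (fun ω => W (h * N) ω - W (h * b) ω) ⁻¹' Icc (L - x) (L - x + γ))
  have hF : MeasurableSet F :=
    (hW.dyadicIncrementSigma_le h a b _ (measurableSet_dyadicTube h a b γ)).inter
      ((hW.measurable _ measurableSet_Icc).inter
        ((hW.measurable _).sub (hW.measurable _) measurableSet_Icc))
  have hFB : F ⊆ {ω | L ≤ W (h * N) ω ∧ W (h * N) ω ≤ L + 4 * γ} := by
    rintro ω ⟨htube, ⟨h₁, h₁'⟩, h₃, h₃'⟩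
    have hr := abs_le.1 (htube 0 b (by simp [hab]))
    simp only [pow_zero, div_one] at hr
    constructor <;> linarith [hr.1, hr.2]
  have hlow : ∀ᵐ ω ∂P, ω ∈ F → ENNReal.ofReal (exp (c * h * (b - a) * exp x)) ≤
      ENNReal.ofReal (exp (c * ∫ s in (0 : ℝ)..h * N, exp (W s ω))) := by
    filter_upwards [hW.ae_continuous] with ω hω ⟨htube, ⟨h₁, _⟩, _⟩
    have := mul_exp_le_integral_exp_of_mem_dyadicTube hh hab hbN.le hω htube h₁
    refine ENNReal.ofReal_le_ofReal (exp_le_exp.2 ?_)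
    calc c * h * (b - a) * exp x = c * (h * (b - a) * exp x) := by ring
      _ ≤ _ := mul_le_mul_of_nonneg_left this hc
  calc _ = ENNReal.ofReal (exp (c * h * (b - a) * exp x)) *
        ENNReal.ofReal ((P (dyadicTube W h a b γ)).toReal * γ ^ 2 *
          (gaussianPDFReal 0 (h * a).toNNReal (x + (|L| + 2 * γ)) *
            gaussianPDFReal 0 (h * N - h * b).toNNReal (x + (|L| + 2 * γ)))) := by
        rw [← ENNReal.ofReal_mul (exp_pos _).le]
        ring_nf
    _ ≤ ENNReal.ofReal (exp (c * h * (b - a) * exp x)) * P F := by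
        gcongr
        exact hW.ofReal_le_measure_dyadicTube_inter hh ha hab hbN hγ L hx
    _ ≤ _ := mul_measure_le_setLIntegral hF hFB hlow

end IsStandardBrownianMotion

theorem restricted_exponential_integral_of_geometric_brownian_motion_eq_top
    {Ω : Type*} [MeasurableSpace Ω] (P : Measure Ω) (W : ℝ → Ω → ℝ)
    (hW : IsStandardBrownianMotion P W)
    (t a b c : ℝ) (ht : 0 < t) (ha : 0 < a) (hb : 0 < b) (hc : 0 < c) (hab : a < b) :
    ∫⁻ ω in {ω | a ≤ Real.exp (W t ω) ∧ Real.exp (W t ω) ≤ b},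
        ENNReal.ofReal (Real.exp (c * ∫ s in (0:ℝ)..t, Real.exp (W s ω))) ∂P = ∞ := by
  have := hW.isProbabilityMeasure
  obtain ⟨γ, hγ, hγab⟩ : ∃ γ > 0, log a + 4 * γ = log b :=
    ⟨(log b - log a) / 4, div_pos (sub_pos.2 (log_lt_log ha hab)) four_pos, by ring⟩
  obtain ⟨n, hn, hpos⟩ := hW.exists_measure_dyadicTube_ne_zero ht hγ
  set h := t / (2 * n)
  have hh : 0 < h := by positivity
  have htN : h * (2 * n : ℕ) = t := by simp only [h]; push_cast; field_simp
  have hB : {ω | log a ≤ W t ω ∧ W t ω ≤ log a + 4 * γ} ⊆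
      {ω | a ≤ exp (W t ω) ∧ exp (W t ω) ≤ b} := fun ω hω =>
    ⟨(log_le_iff_le_exp ha).1 hω.1, (le_log_iff_exp_le hb).1 (hγab ▸ hω.2)⟩
  refine ENNReal.eq_top_of_forall_ofReal_le ?_ fun m =>
    (hW.ofReal_le_setLIntegral_exp_integral_exp hh (by omega) (Nat.le_succ n)
      (by omega : n + 1 < 2 * n) hγ.le hc.le (log a) m.cast_nonneg).trans ?_
  · refine ((tendsto_exp_mul_exp_mul_gaussianPDFReal_mul ?_ ?_ ?_ _).const_mul_atTop
      (mul_pos (ENNReal.toReal_pos hpos (measure_ne_top _ _)) (pow_pos hγ 2))).comp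
        tendsto_natCast_atTop_atTop
    · push_cast
      simpa using mul_pos hc hh
    · exact (Real.toNNReal_pos.2 (by positivity)).ne'
    · exact (Real.toNNReal_pos.2 (sub_pos.2 (by gcongr; omega))).ne'
  · rw [htN]
    exact lintegral_mono_set hB
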